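/- Privacy amplification by Poisson subsampling (remove/add version on event level upper bounds): let M be ε-DP and let Sample_γ denote Poisson subsampling with rate γ ∈ [0,1]. If for neighboring D₀, D₁ (D₁ = D₀ with one extra record) and any event R' we write p = P[(M ∘ Sample_γ)(D₀) ∈ R'] and q = P[(M ∘ Sample_γ)(D₁) ∈ R'], then q ≤ (1−γ)p + γ e^ε p = (1 + γ(e^ε − 1)) p, so M ∘ Sample_γ is log(1 + γ(e^ε−1))-DP in this direction. -/

import Mathlib

/-!
Split the subsamples of `insert x D₀` according to whether they contain `x`. Those without `x`
are exactly the subsamples of `D₀`, each weighted by an extra factor `1 - γ`; those with `x` are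
`insert x s` for subsamples `s` of `D₀`, each weighted by an extra factor `γ`, and on them `ε`-DP
of `M` costs at most a factor `e^ε`. Hence `q ≤ (1 - γ) p + γ e^ε p`.
-/

open Finset ENNReal

theorem PMF.toOuterMeasure_bind_apply_eq_sum {α β : Type*} (p : PMF α) (T : Finset α)
    (hp : ∀ a ∉ T, p a = 0) (f : α → PMF β) (S : Set β) :
    (p.bind f).toOuterMeasure S = ∑ a ∈ T, p a * (f a).toOuterMeasure S := by
  rw [PMF.toOuterMeasure_bind_apply]
  exact tsum_eq_sum fun a ha => by rw [hp a ha, zero_mul]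

section PoissonSubsampling

variable {X : Type*} [DecidableEq X]

noncomputable def poissonWeight (γ : ℝ) (D s : Finset X) : ℝ≥0∞ :=
  if s ⊆ D then ENNReal.ofReal (γ ^ s.card * (1 - γ) ^ (D.card - s.card)) else 0

theorem poissonWeight_eq_zero_of_notMem_powerset {γ : ℝ} {D s : Finset X} (hs : s ∉ D.powerset) :
    poissonWeight γ D s = 0 :=
  if_neg (by simpa using hs)

theorem poissonWeight_insert_of_subset {γ : ℝ} (hγ : γ ≤ 1) {D s : Finset X} {x : X}
    (hx : x ∉ D) (hs : s ⊆ D) :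
    poissonWeight γ (insert x D) s = ENNReal.ofReal (1 - γ) * poissonWeight γ D s := by
  have hexp : (insert x D).card - s.card = D.card - s.card + 1 := by
    rw [card_insert_of_notMem hx]
    have := card_le_card hs
    omega
  rw [poissonWeight, poissonWeight, if_pos (hs.trans (subset_insert x D)), if_pos hs, hexp,
    ← ENNReal.ofReal_mul (by linarith)]
  congr 1
  ring

theorem poissonWeight_insert_insert {γ : ℝ} (hγ : 0 ≤ γ) {D s : Finset X} {x : X}
    (hx : x ∉ D) (hs : s ⊆ D) :
    poissonWeight γ (insert x D) (insert x s) = ENNReal.ofReal γ * poissonWeight γ D s := by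
  have hxs : x ∉ s := fun h => hx (hs h)
  rw [poissonWeight, poissonWeight, if_pos (insert_subset_insert x hs), if_pos hs,
    card_insert_of_notMem hx, card_insert_of_notMem hxs, Nat.add_sub_add_right,
    ← ENNReal.ofReal_mul hγ]
  congr 1
  ring

theorem sum_powerset_insert_poissonWeight_mul {γ : ℝ} (hγ₀ : 0 ≤ γ) (hγ₁ : γ ≤ 1)
    {D : Finset X} {x : X} (hx : x ∉ D) (g : Finset X → ℝ≥0∞) :
    ∑ s ∈ (insert x D).powerset, poissonWeight γ (insert x D) s * g s =
      ENNReal.ofReal (1 - γ) * ∑ s ∈ D.powerset, poissonWeight γ D s * g s +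
        ENNReal.ofReal γ * ∑ s ∈ D.powerset, poissonWeight γ D s * g (insert x s) := by
  rw [sum_powerset_insert hx, mul_sum, mul_sum]
  congr 1 <;> refine sum_congr rfl fun s hs => ?_
  · rw [poissonWeight_insert_of_subset hγ₁ hx (mem_powerset.mp hs), mul_assoc]
  · rw [poissonWeight_insert_insert hγ₀ hx (mem_powerset.mp hs), mul_assoc]

end PoissonSubsampling

theorem ofReal_one_sub_add_mul_exp {γ : ℝ} (ε : ℝ) (hγ₀ : 0 ≤ γ) (hγ₁ : γ ≤ 1) :
    ENNReal.ofReal (1 - γ) + ENNReal.ofReal γ * ENNReal.ofReal (Real.exp ε) =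
      ENNReal.ofReal (1 + γ * (Real.exp ε - 1)) := by
  rw [← ENNReal.ofReal_mul hγ₀,
    ← ENNReal.ofReal_add (by linarith) (mul_nonneg hγ₀ (Real.exp_nonneg ε))]
  congr 1
  ring

theorem poisson_subsampling_amplification_general {X R : Type*} [DecidableEq X]
    (γ ε : ℝ) (h0 : 0 ≤ γ) (h1 : γ ≤ 1)
    (Sample : Finset X → PMF (Finset X))
    (hSample : ∀ D s, Sample D s =
      if s ⊆ D then ENNReal.ofReal (γ ^ s.card * (1 - γ) ^ (D.card - s.card))
      else 0)
    (M : Finset X → PMF R)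
    (hM : ∀ (s : Finset X) (x : X), x ∉ s → ∀ S : Set R,
      (M (insert x s)).toOuterMeasure S ≤
          ENNReal.ofReal (Real.exp ε) * (M s).toOuterMeasure S ∧
      (M s).toOuterMeasure S ≤
          ENNReal.ofReal (Real.exp ε) * (M (insert x s)).toOuterMeasure S) :
    ∀ (D₀ : Finset X) (x : X), x ∉ D₀ → ∀ S : Set R,
      (((Sample (insert x D₀)).bind M).toOuterMeasure S) ≤
        ENNReal.ofReal (1 + γ * (Real.exp ε - 1)) *
          (((Sample D₀).bind M).toOuterMeasure S) := by
  intro D₀ x hx S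
  have hSample : ∀ D s, Sample D s = poissonWeight γ D s := hSample
  have hbind (D : Finset X) : ((Sample D).bind M).toOuterMeasure S =
      ∑ s ∈ D.powerset, poissonWeight γ D s * (M s).toOuterMeasure S := by
    simp_rw [PMF.toOuterMeasure_bind_apply_eq_sum _ D.powerset (fun s hs => by
      rw [hSample]; exact poissonWeight_eq_zero_of_notMem_powerset hs), hSample]
  set p := ∑ s ∈ D₀.powerset, poissonWeight γ D₀ s * (M s).toOuterMeasure S
  have hkept : ∑ s ∈ D₀.powerset, poissonWeight γ D₀ s * (M (insert x s)).toOuterMeasure S ≤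
      ENNReal.ofReal (Real.exp ε) * p := by
    rw [mul_sum]
    refine sum_le_sum fun s hs => ?_
    rw [mul_left_comm]
    exact mul_le_mul_right (hM s x (fun h => hx (mem_powerset.mp hs h)) S).1 _
  calc ((Sample (insert x D₀)).bind M).toOuterMeasure S
      = ENNReal.ofReal (1 - γ) * p + ENNReal.ofReal γ *
          ∑ s ∈ D₀.powerset, poissonWeight γ D₀ s * (M (insert x s)).toOuterMeasure S := by
        rw [hbind, sum_powerset_insert_poissonWeight_mul h0 h1 hx]
    _ ≤ ENNReal.ofReal (1 - γ) * p + ENNReal.ofReal γ * (ENNReal.ofReal (Real.exp ε) * p) := by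
        gcongr
    _ = ENNReal.ofReal (1 + γ * (Real.exp ε - 1)) * ((Sample D₀).bind M).toOuterMeasure S := by
        rw [hbind, ← mul_assoc, ← add_mul, ofReal_one_sub_add_mul_exp ε h0 h1]

/-- Privacy amplification by Poisson subsampling (add-one direction): let
`Sample` be Poisson subsampling with rate `γ` (each record of the dataset is
kept independently with probability `γ`), and let `M` be `ε`-DP under
add/remove-one-record neighboring. Then for neighboring datasets
`D₀` and `D₁ = insert x D₀`, and any event `S`,
`P[(M ∘ Sample)(D₁) ∈ S] ≤ (1 + γ(e^ε − 1)) · P[(M ∘ Sample)(D₀) ∈ S]`,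
i.e. `M ∘ Sample` is `log(1 + γ(e^ε−1))`-DP in this direction. -/
theorem poisson_subsampling_amplification {X R : Type*} [DecidableEq X]
    (γ ε : ℝ) (h0 : 0 ≤ γ) (h1 : γ ≤ 1) (hε : 0 ≤ ε)
    (Sample : Finset X → PMF (Finset X))
    (hSample : ∀ D s, Sample D s =
      if s ⊆ D then ENNReal.ofReal (γ ^ s.card * (1 - γ) ^ (D.card - s.card))
      else 0)
    (M : Finset X → PMF R)
    (hM : ∀ (s : Finset X) (x : X), x ∉ s → ∀ S : Set R,
      (M (insert x s)).toOuterMeasure S ≤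
          ENNReal.ofReal (Real.exp ε) * (M s).toOuterMeasure S ∧
      (M s).toOuterMeasure S ≤
          ENNReal.ofReal (Real.exp ε) * (M (insert x s)).toOuterMeasure S) :
    ∀ (D₀ : Finset X) (x : X), x ∉ D₀ → ∀ S : Set R,
      (((Sample (insert x D₀)).bind M).toOuterMeasure S) ≤
        ENNReal.ofReal (1 + γ * (Real.exp ε - 1)) *
          (((Sample D₀).bind M).toOuterMeasure S) :=
  poisson_subsampling_amplification_general γ ε h0 h1 Sample hSample M hM
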